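/- For every finite H ⊆ [p]^n there exists an orientation of the one-inclusion graph of H with maximum out-degree at most 4·d_E(H). -/

import Mathlib

/-!
Split `H ⊆ [p]^(n+1)` into layers `L_k`, `k < p`: the traces of `H` on the first `n` coordinates
with more than `k` extensions in the last one, so that `|H| = ∑ₖ |L_k|`. For `k ≥ 1` a shattered
set of coordinates of `L_k` stays shattered by `H` after adding the last coordinate, so
`d_E(L_k) < d_E(H)`. Induction on `n` over the layers then bounds the total excess `∑ₑ (|e| - 1)`
of the edges by `d_E(H)·|H|`, and since `|e| ≤ 2(|e| - 1)` for non-singleton edges, the average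
degree by `2·d_E(H)`. As `d_E` is monotone, every subclass has a vertex of degree at most
`2·d_E(H)`: remove it, orient the rest recursively, and assign each edge through it as its
remainder is assigned.
-/

open Finset

/-- The edge of the one-inclusion graph of `H ⊆ [p]^n` in direction `i` through `g`:
all members of `H` agreeing with `g` off coordinate `i`. -/
def edgeF {n p : ℕ} (H : Finset (Fin n → Fin p)) (i : Fin n) (g : Fin n → Fin p) :
    Finset (Fin n → Fin p) :=
  H.filter (fun h => ∀ j, j ≠ i → h j = g j)

/-- The shifting operator in direction `i`: each edge is pushed downward, i.e. replaced by
the words agreeing with its pattern off `i` whose `i`-th coordinate is among the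
`|e|` smallest values. -/
def shift {n p : ℕ} (i : Fin n) (H : Finset (Fin n → Fin p)) : Finset (Fin n → Fin p) :=
  Finset.univ.filter (fun g => (g i).val < (edgeF H i g).card)

/-- The projection of `H` to a sequence `S` of coordinates. -/
def projF {n p k : ℕ} (H : Finset (Fin n → Fin p)) (S : Fin k → Fin n) :
    Finset (Fin k → Fin p) :=
  H.image (fun h => fun j => h (S j))

/-- `H` E-shatters size `k` if some sequence of `k` coordinates has projection of size `≥ 2^k`. -/
def EShatters {n p : ℕ} (H : Finset (Fin n → Fin p)) (k : ℕ) : Prop :=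
  ∃ S : Fin k → Fin n, 2 ^ k ≤ (projF H S).card

/-- The exponential dimension: the largest `k` that `H` E-shatters. -/
noncomputable def dE {n p : ℕ} (H : Finset (Fin n → Fin p)) : ℕ :=
  sSup {k | EShatters H k}

/-- The number of edges of the one-inclusion graph of `H` in direction `j`
(equivalently, the number of distinct patterns of `H` off coordinate `j`). -/
def numEdges {n p : ℕ} (H : Finset (Fin n → Fin p)) (j : Fin n) : ℕ :=
  (H.image (fun h => fun k : {k : Fin n // k ≠ j} => h k.1)).card

/-- `avd'(H) = (1/|H|) Σ_{e ∈ E} (|e| − 1)`, over all edges including singletons. -/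
def avd' {n p : ℕ} (H : Finset (Fin n → Fin p)) : ℚ :=
  (∑ j : Fin n, ((H.card : ℚ) - (numEdges H j : ℚ))) / (H.card : ℚ)

/-- The degree of `v`: the number of non-singleton edges of the one-inclusion graph
containing `v`. -/
def deg {n p : ℕ} (H : Finset (Fin n → Fin p)) (v : Fin n → Fin p) : ℕ :=
  (Finset.univ.filter (fun j : Fin n => 2 ≤ (edgeF H j v).card)).card

/-- The average degree of the one-inclusion graph of `H`. -/
def avd {n p : ℕ} (H : Finset (Fin n → Fin p)) : ℚ :=
  (∑ v ∈ H, (deg H v : ℚ)) / (H.card : ℚ)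

open scoped Classical

/-- An orientation of the one-inclusion graph of `H`. -/
structure OIOrientation {Y : Type*} {n : ℕ} (H : Set (Fin n → Y)) where
  σ : Fin n → (Fin n → Y) → (Fin n → Y)
  mem_of_mem : ∀ (i : Fin n), ∀ h ∈ H, σ i h ∈ H
  agree : ∀ (i : Fin n), ∀ h ∈ H, ∀ j, j ≠ i → σ i h j = h j
  consistent : ∀ (i : Fin n), ∀ g ∈ H, ∀ h ∈ H, (∀ j, j ≠ i → g j = h j) → σ i g = σ i h

/-- The out-degree of a vertex `v` under the orientation. -/
noncomputable def outdeg {Y : Type*} {n : ℕ} {H : Set (Fin n → Y)}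
    (o : OIOrientation H) (v : Fin n → Y) : ℕ :=
  (Finset.univ.filter (fun i : Fin n => o.σ i v ≠ v)).card

section Fibers
variable {α β γ : Type*} [DecidableEq β] [DecidableEq γ]

theorem card_image_eq_card_image_of_eq_iff {s : Finset α} {f : α → β} {g : α → γ}
    (hfg : ∀ a ∈ s, ∀ b ∈ s, f a = f b ↔ g a = g b) : #(s.image f) = #(s.image g) := by
  have hfst : #(s.image f) = #(s.image fun a => (f a, g a)) := by
    rw [← card_image_of_injOn (s := s.image fun a => (f a, g a)) (f := Prod.fst), image_image]
    · rfl
    · simp only [Set.InjOn, coe_image, Set.mem_image, mem_coe]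
      rintro _ ⟨a, ha, rfl⟩ _ ⟨b, hb, rfl⟩ hab
      simp only [Prod.mk.injEq]
      exact ⟨hab, (hfg a ha b hb).1 hab⟩
  have hsnd : #(s.image g) = #(s.image fun a => (f a, g a)) := by
    rw [← card_image_of_injOn (s := s.image fun a => (f a, g a)) (f := Prod.snd), image_image]
    · rfl
    · simp only [Set.InjOn, coe_image, Set.mem_image, mem_coe]
      rintro _ ⟨a, ha, rfl⟩ _ ⟨b, hb, rfl⟩ hab
      simp only [Prod.mk.injEq]
      exact ⟨(hfg a ha b hb).2 hab, hab⟩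
  rw [hfst, hsnd]

theorem sum_range_card_filter_lt {s : Finset α} {c : α → ℕ} {m : ℕ} (hc : ∀ a ∈ s, c a ≤ m) :
    ∑ k ∈ range m, #(s.filter (k < c ·)) = ∑ a ∈ s, c a := by
  simp only [card_filter]
  rw [sum_comm]
  refine sum_congr rfl fun a ha => ?_
  rw [← card_filter]
  refine (congrArg card ?_).trans (card_range (c a))
  ext k
  simp only [mem_filter, mem_range]
  have := hc a ha
  omega

theorem card_filter_two_le_card_fiber_add_two_mul_card_image_le (s : Finset α) (f : α → β) :
    #(s.filter fun a => 2 ≤ #(s.filter (f · = f a))) + 2 * #(s.image f) ≤ 2 * #s := by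
  set P := fun a => 2 ≤ #(s.filter (f · = f a))
  have hfiber : ∀ b ∈ s.image f,
      #((s.filter P).filter (f · = b)) + 2 ≤ 2 * #(s.filter (f · = b)) := by
    intro b hb
    obtain ⟨a, ha, rfl⟩ := mem_image.1 hb
    have hpos : 0 < #(s.filter (f · = f a)) := card_pos.2 ⟨a, mem_filter.2 ⟨ha, rfl⟩⟩
    have hle : #((s.filter P).filter (f · = f a)) ≤ #(s.filter (f · = f a)) :=
      card_le_card (filter_subset_filter _ (filter_subset _ _))
    have htwo : 0 < #((s.filter P).filter (f · = f a)) → 2 ≤ #(s.filter (f · = f a)) := by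
      intro h
      obtain ⟨x, hx⟩ := card_pos.1 h
      simp only [mem_filter] at hx
      simpa [P, hx.2] using hx.1.2
    omega
  calc #(s.filter P) + 2 * #(s.image f)
      = ∑ b ∈ s.image f, (#((s.filter P).filter (f · = b)) + 2) := by
        rw [sum_add_distrib, sum_const, smul_eq_mul, mul_comm,
          ← card_eq_sum_card_fiberwise fun a ha => mem_image_of_mem f (mem_filter.1 ha).1]
    _ ≤ ∑ b ∈ s.image f, 2 * #(s.filter (f · = b)) := sum_le_sum hfiber
    _ = 2 * #s := by rw [← mul_sum, ← card_eq_sum_card_image]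

end Fibers

section Edges
variable {n p : ℕ} {Y : Type*}

def restrictOff (j : Fin n) (h : Fin n → Y) : {k : Fin n // k ≠ j} → Y := fun k => h k

theorem restrictOff_eq_restrictOff_iff {j : Fin n} {g h : Fin n → Y} :
    restrictOff j g = restrictOff j h ↔ ∀ k, k ≠ j → g k = h k := by
  simp [restrictOff, funext_iff]

theorem edgeF_eq_filter (H : Finset (Fin n → Fin p)) (j : Fin n) (v : Fin n → Fin p) :
    edgeF H j v = H.filter (restrictOff j · = restrictOff j v) :=
  filter_congr fun _ _ => restrictOff_eq_restrictOff_iff.symm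

theorem numEdges_eq_card_image_restrictOff (H : Finset (Fin n → Fin p)) (j : Fin n) :
    numEdges H j = #(H.image (restrictOff j)) :=
  rfl

theorem sum_deg_add_two_mul_sum_numEdges_le (H : Finset (Fin n → Fin p)) :
    ∑ v ∈ H, deg H v + 2 * ∑ j, numEdges H j ≤ 2 * (n * #H) := by
  have hdeg : ∑ v ∈ H, deg H v = ∑ j, #(H.filter fun v => 2 ≤ #(edgeF H j v)) := by
    simp only [deg, card_filter]
    exact sum_comm
  calc ∑ v ∈ H, deg H v + 2 * ∑ j, numEdges H j
      = ∑ j, (#(H.filter fun v => 2 ≤ #(edgeF H j v)) + 2 * numEdges H j) := by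
        rw [hdeg, mul_sum, sum_add_distrib]
    _ ≤ ∑ _j : Fin n, 2 * #H := sum_le_sum fun j _ => by
        simpa only [edgeF_eq_filter, numEdges_eq_card_image_restrictOff] using
          card_filter_two_le_card_fiber_add_two_mul_card_image_le H (restrictOff j)
    _ = 2 * (n * #H) := by simp [mul_left_comm]

end Edges

section ExponentialDimension
variable {n m p k : ℕ} {G : Finset (Fin m → Fin p)} {H : Finset (Fin n → Fin p)}

theorem EShatters.lt_card (h : EShatters H k) : k < #H := by
  obtain ⟨S, hS⟩ := h
  exact k.lt_two_pow_self.trans_le (hS.trans card_image_le)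

theorem bddAbove_setOf_eShatters (H : Finset (Fin n → Fin p)) : BddAbove {k | EShatters H k} :=
  ⟨#H, fun _ hk => hk.lt_card.le⟩

theorem EShatters.le_dE (h : EShatters H k) : k ≤ dE H :=
  le_csSup (bddAbove_setOf_eShatters H) h

theorem eShatters_dE (hH : H.Nonempty) : EShatters H (dE H) := by
  have hzero : EShatters H 0 := ⟨Fin.elim0, by simpa [projF] using hH⟩
  exact Nat.sSup_mem ⟨0, hzero⟩ (bddAbove_setOf_eShatters H)

theorem dE_le_dE_of_eShatters (h : ∀ k, EShatters G k → EShatters H k) : dE G ≤ dE H :=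
  csSup_le_csSup' (bddAbove_setOf_eShatters H) h

theorem dE_mono {G : Finset (Fin n → Fin p)} (hGH : G ⊆ H) : dE G ≤ dE H :=
  dE_le_dE_of_eShatters fun _ ⟨S, hS⟩ => ⟨S, hS.trans (card_le_card (image_subset_image hGH))⟩

end ExponentialDimension

section Layers
variable {n p : ℕ} (H : Finset (Fin (n + 1) → Fin p))

def extensions (g : Fin n → Fin p) : Finset (Fin p) :=
  univ.filter fun t => Fin.snoc g t ∈ H

def layer (k : ℕ) : Finset (Fin n → Fin p) :=
  (H.image Fin.init).filter fun g => k < #(extensions H g)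

theorem card_eq_sum_card_extensions : #H = ∑ g ∈ H.image Fin.init, #(extensions H g) := by
  rw [card_eq_sum_card_image Fin.init H]
  refine sum_congr rfl fun g _ => ?_
  have hfiber : H.filter (Fin.init · = g) = (extensions H g).image (Fin.snoc g) := by
    ext h
    simp only [mem_filter, extensions, mem_image, mem_univ, true_and]
    constructor
    · rintro ⟨hh, rfl⟩
      exact ⟨h (Fin.last n), by rwa [Fin.snoc_init_self], Fin.snoc_init_self h⟩
    · rintro ⟨t, ht, rfl⟩
      exact ⟨ht, Fin.init_snoc _ _⟩
  rw [hfiber, card_image_of_injective _ fun s t hst => by simpa using congrFun hst (Fin.last n)]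

theorem card_eq_sum_card_layer : #H = ∑ k ∈ range p, #(layer H k) := by
  rw [card_eq_sum_card_extensions, ← sum_range_card_filter_lt fun g _ =>
    (card_le_univ (extensions H g)).trans_eq (Fintype.card_fin p)]
  rfl

theorem layer_zero : layer H 0 = H.image Fin.init := by
  refine filter_true_of_mem fun g hg => card_pos.2 ?_
  obtain ⟨h, hh, rfl⟩ := mem_image.1 hg
  exact ⟨h (Fin.last n), by simpa [extensions, Fin.snoc_init_self] using hh⟩

theorem numEdges_last : numEdges H (Fin.last n) = #(H.image Fin.init) := by
  rw [numEdges_eq_card_image_restrictOff]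
  refine card_image_eq_card_image_of_eq_iff fun g _ h _ => ?_
  rw [restrictOff_eq_restrictOff_iff, funext_iff]
  simp [Fin.forall_fin_succ', Fin.init, Fin.castSucc_ne_last]

theorem numEdges_castSucc (j : Fin n) : numEdges H j.castSucc =
    #(H.image fun h => (restrictOff j (Fin.init h), h (Fin.last n))) := by
  rw [numEdges_eq_card_image_restrictOff]
  refine card_image_eq_card_image_of_eq_iff fun g _ h _ => ?_
  rw [restrictOff_eq_restrictOff_iff, Prod.mk.injEq, restrictOff_eq_restrictOff_iff]
  simp [Fin.forall_fin_succ', Fin.init, (Fin.castSucc_lt_last j).ne']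

/-- A pattern off `j` of a member of layer `k` occurs in `H` with more than `k` values of the
last coordinate. -/
theorem sum_numEdges_layer_le (j : Fin n) :
    ∑ k ∈ range p, numEdges (layer H k) j ≤ numEdges H j.castSucc := by
  set W := H.image fun h => (restrictOff j (Fin.init h), h (Fin.last n))
  set c := fun q => #(W.filter (·.1 = q))
  have hc : ∀ q ∈ W.image Prod.fst, c q ≤ p := by
    intro q _
    refine (card_le_card_of_injOn Prod.snd (t := univ) (fun _ _ => mem_coe.2 (mem_univ _))
      fun x hx y hy hxy => Prod.ext ?_ hxy).trans_eq (card_fin p)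
    exact (mem_filter.1 hx).2.trans (mem_filter.1 hy).2.symm
  have hlayer : ∀ k, (layer H k).image (restrictOff j) ⊆ (W.image Prod.fst).filter (k < c ·) := by
    intro k q hq
    obtain ⟨g, hg, rfl⟩ := mem_image.1 hq
    have hext : ∀ t ∈ extensions H g, (restrictOff j g, t) ∈ W.filter (·.1 = restrictOff j g) := by
      intro t ht
      refine mem_filter.2 ⟨mem_image.2 ⟨Fin.snoc g t, (mem_filter.1 ht).2, ?_⟩, rfl⟩
      simp
    have hk : k < #(extensions H g) := (mem_filter.1 hg).2
    obtain ⟨t, ht⟩ := card_pos.1 (k.zero_le.trans_lt hk)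
    refine mem_filter.2 ⟨mem_image.2 ⟨_, (mem_filter.1 (hext t ht)).1, rfl⟩, ?_⟩
    exact hk.trans_le (card_le_card_of_injOn (fun t => (restrictOff j g, t)) hext
      fun _ _ _ _ h => (Prod.mk.inj h).2)
  calc ∑ k ∈ range p, numEdges (layer H k) j
      ≤ ∑ k ∈ range p, #((W.image Prod.fst).filter (k < c ·)) :=
        sum_le_sum fun k _ => card_le_card (hlayer k)
    _ = #W := by rw [sum_range_card_filter_lt hc, ← card_eq_sum_card_image]
    _ = numEdges H j.castSucc := (numEdges_castSucc H j).symm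

end Layers

section LayerShattering
variable {n p k d : ℕ} (H : Finset (Fin (n + 1) → Fin p))

theorem EShatters.of_image_init (h : EShatters (H.image Fin.init) d) : EShatters H d := by
  obtain ⟨S, hS⟩ := h
  refine ⟨fun i => (S i).castSucc, ?_⟩
  rwa [projF, image_image] at hS

theorem dE_layer_zero_le : dE (layer H 0) ≤ dE H := by
  rw [layer_zero]
  exact dE_le_dE_of_eShatters fun _ => EShatters.of_image_init H

/-- Above a shattered set of coordinates of a higher layer, the last coordinate takes at least
two values, which doubles the projection. -/
theorem EShatters.succ_of_layer (hk : 0 < k) (h : EShatters (layer H k) d) :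
    EShatters H (d + 1) := by
  obtain ⟨S, hS⟩ := h
  set P := projF (layer H k) S
  set X := projF H (Fin.snoc (fun i => (S i).castSucc) (Fin.last n))
  have hfiber : ∀ r ∈ P, 2 ≤ #(X.filter (Fin.init · = r)) := by
    intro r hr
    obtain ⟨g, hg, rfl⟩ := mem_image.1 hr
    have hsnoc : ∀ t ∈ extensions H g,
        Fin.snoc (fun i => g (S i)) t ∈ X.filter (Fin.init · = fun i => g (S i)) := by
      intro t ht
      refine mem_filter.2 ⟨mem_image.2 ⟨Fin.snoc g t, (mem_filter.1 ht).2, ?_⟩, Fin.init_snoc _ _⟩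
      rw [← Function.comp_def, Fin.comp_snoc]
      simp [Function.comp_def]
    have htwo : 1 < #(extensions H g) := (Nat.succ_le_of_lt hk).trans_lt (mem_filter.1 hg).2
    obtain ⟨t₁, ht₁, t₂, ht₂, hne⟩ := one_lt_card.1 htwo
    exact one_lt_card.2 ⟨_, hsnoc t₁ ht₁, _, hsnoc t₂ ht₂,
      fun h => hne (by simpa using congrFun h (Fin.last d))⟩
  refine ⟨Fin.snoc (fun i => (S i).castSucc) (Fin.last n), ?_⟩
  calc 2 ^ (d + 1) = 2 * 2 ^ d := pow_succ' 2 d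
    _ ≤ ∑ r ∈ P, 2 := by rw [sum_const, smul_eq_mul]; omega
    _ ≤ ∑ r ∈ P, #(X.filter (Fin.init · = r)) := sum_le_sum hfiber
    _ ≤ #X := by rw [sum_card_fiberwise_eq_card_filter]; exact card_filter_le _ _

theorem dE_layer_lt (hk : 0 < k) (hne : (layer H k).Nonempty) : dE (layer H k) < dE H :=
  ((eShatters_dE hne).succ_of_layer H hk).le_dE

end LayerShattering

section Density
variable {p : ℕ}

theorem succ_mul_card_layer_le {n : ℕ} (H : Finset (Fin (n + 1) → Fin p))
    (ih : ∀ G : Finset (Fin n → Fin p), n * #G ≤ dE G * #G + ∑ j, numEdges G j) (k : ℕ) :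
    (n + 1) * #(layer H k) ≤ dE H * #(layer H k) + ∑ j, numEdges (layer H k) j +
      if k = 0 then #(layer H k) else 0 := by
  have hL := ih (layer H k)
  rcases k.eq_zero_or_pos with rfl | hk
  · have := Nat.mul_le_mul_right #(layer H 0) (dE_layer_zero_le H)
    simp only [if_true]
    linarith
  rcases (layer H k).eq_empty_or_nonempty with he | hne
  · simp [he]
  · have := Nat.mul_le_mul_right #(layer H k) (dE_layer_lt H hk hne)
    rw [if_neg hk.ne']
    linarith

/-- As `n·|H| - ∑ⱼ numEdges H j = ∑ₑ (|e| - 1)`, summed over the edges `e`, this bounds the total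
excess of the edges by `d_E(H)·|H|`. -/
theorem mul_card_le_dE_mul_card_add_sum_numEdges :
    ∀ {n : ℕ} (H : Finset (Fin n → Fin p)), n * #H ≤ dE H * #H + ∑ j, numEdges H j
  | 0, _ => by simp
  | n + 1, H => by
    have hlayer := succ_mul_card_layer_le H mul_card_le_dE_mul_card_add_sum_numEdges
    have hzero : ∑ k ∈ range p, (if k = 0 then #(layer H k) else 0) ≤ numEdges H (Fin.last n) := by
      rw [sum_ite_eq' (range p) 0 (fun k => #(layer H k)), numEdges_last, ← layer_zero]
      split_ifs <;> simp
    calc (n + 1) * #H = ∑ k ∈ range p, (n + 1) * #(layer H k) := by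
          rw [← mul_sum, ← card_eq_sum_card_layer]
      _ ≤ ∑ k ∈ range p, (dE H * #(layer H k) + ∑ j, numEdges (layer H k) j +
            if k = 0 then #(layer H k) else 0) := sum_le_sum fun k _ => hlayer k
      _ = dE H * #H + ∑ j, ∑ k ∈ range p, numEdges (layer H k) j +
            ∑ k ∈ range p, (if k = 0 then #(layer H k) else 0) := by
          rw [sum_add_distrib, sum_add_distrib, ← mul_sum, ← card_eq_sum_card_layer, sum_comm]
      _ ≤ dE H * #H + ∑ j : Fin n, numEdges H j.castSucc + numEdges H (Fin.last n) := by
          gcongr with j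
          exact sum_numEdges_layer_le H j
      _ = dE H * #H + ∑ j, numEdges H j := by rw [Fin.sum_univ_castSucc, add_assoc]

theorem exists_deg_le_two_mul_dE {n : ℕ} {H : Finset (Fin n → Fin p)} (hH : H.Nonempty) :
    ∃ v ∈ H, deg H v ≤ 2 * dE H := by
  refine exists_le_of_sum_le hH ?_
  have hdeg := sum_deg_add_two_mul_sum_numEdges_le H
  have hexcess := mul_card_le_dE_mul_card_add_sum_numEdges H
  rw [sum_const, smul_eq_mul]
  linarith

end Density

section Orientation
variable {n p : ℕ} {H : Finset (Fin n → Fin p)} {i : Fin n} {g h u v : Fin n → Fin p}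

theorem mem_edgeF : h ∈ edgeF H i g ↔ h ∈ H ∧ ∀ j, j ≠ i → h j = g j :=
  mem_filter

theorem self_mem_edgeF (hg : g ∈ H) : g ∈ edgeF H i g :=
  mem_edgeF.2 ⟨hg, fun _ _ => rfl⟩

theorem edgeF_congr (hgh : ∀ j, j ≠ i → g j = h j) : edgeF H i g = edgeF H i h :=
  filter_congr fun x _ => forall₂_congr fun j hj => by rw [hgh j hj]

theorem edgeF_erase : edgeF (H.erase v) i g = (edgeF H i g).erase v :=
  filter_erase _ _ _

noncomputable def OIOrientation.extendErase
    (o : OIOrientation ((H.erase v : Finset _) : Set (Fin n → Fin p))) :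
    OIOrientation (H : Set (Fin n → Fin p)) where
  σ i h := if hne : (edgeF (H.erase v) i h).Nonempty then o.σ i hne.choose else h
  mem_of_mem i h hh := by
    split_ifs with hne
    · exact mem_of_mem_erase (o.mem_of_mem i _ (mem_edgeF.1 hne.choose_spec).1)
    · exact hh
  agree i h _ j hj := by
    split_ifs with hne
    · obtain ⟨hw, hwh⟩ := mem_edgeF.1 hne.choose_spec
      rw [o.agree i _ hw j hj, hwh j hj]
    · rfl
  consistent i g hg h hh hgh := by
    have hedge : edgeF (H.erase v) i g = edgeF (H.erase v) i h := edgeF_congr hgh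
    by_cases hne : (edgeF (H.erase v) i g).Nonempty
    · have hne' : (edgeF (H.erase v) i h).Nonempty := hedge ▸ hne
      rw [dif_pos hne, dif_pos hne']
      obtain ⟨hwg, hwgg⟩ := mem_edgeF.1 hne.choose_spec
      obtain ⟨hwh, hwhh⟩ := mem_edgeF.1 hne'.choose_spec
      exact o.consistent i _ hwg _ hwh fun j hj => by rw [hwgg j hj, hwhh j hj, hgh j hj]
    · have hne' : ¬(edgeF (H.erase v) i h).Nonempty := hedge ▸ hne
      rw [dif_neg hne, dif_neg hne']
      have hgv : g = v := by_contra fun hgv => hne ⟨g, self_mem_edgeF (mem_erase.2 ⟨hgv, hg⟩)⟩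
      have hhv : h = v := by_contra fun hhv => hne' ⟨h, self_mem_edgeF (mem_erase.2 ⟨hhv, hh⟩)⟩
      rw [hgv, hhv]

variable (o : OIOrientation ((H.erase v : Finset _) : Set (Fin n → Fin p)))

theorem OIOrientation.extendErase_σ_of_mem (hu : u ∈ H.erase v) :
    o.extendErase.σ i u = o.σ i u := by
  have hne : (edgeF (H.erase v) i u).Nonempty := ⟨u, self_mem_edgeF hu⟩
  obtain ⟨hw, hwu⟩ := mem_edgeF.1 hne.choose_spec
  simp only [OIOrientation.extendErase, dif_pos hne]
  exact o.consistent i _ hw u hu hwu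

theorem OIOrientation.outdeg_extendErase_of_mem (hu : u ∈ H.erase v) :
    outdeg o.extendErase u = outdeg o u := by
  simp only [outdeg, o.extendErase_σ_of_mem hu]
  congr

theorem OIOrientation.outdeg_extendErase_self_le (hv : v ∈ H) :
    outdeg o.extendErase v ≤ deg H v := by
  refine card_le_card fun i hi => mem_filter.2 ⟨mem_univ i, ?_⟩
  have hne : (edgeF (H.erase v) i v).Nonempty := by
    by_contra hne
    simp [OIOrientation.extendErase, hne] at hi
  obtain ⟨w, hw⟩ := hne
  rw [edgeF_erase, mem_erase] at hw
  exact one_lt_card.2 ⟨w, hw.2, v, self_mem_edgeF hv, hw.1⟩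

end Orientation

theorem exists_orientation_outdeg_le_of_forall_exists_deg_le {n p d : ℕ}
    (H : Finset (Fin n → Fin p)) (hH : ∀ G ⊆ H, G.Nonempty → ∃ v ∈ G, deg G v ≤ d) :
    ∃ o : OIOrientation (H : Set (Fin n → Fin p)), ∀ v ∈ H, outdeg o v ≤ d := by
  induction H using Finset.strongInduction with
  | H H ih =>
    rcases H.eq_empty_or_nonempty with rfl | hne
    · exact ⟨⟨fun _ h => h, fun _ _ hh => hh, fun _ _ _ _ _ => rfl,
        fun _ g hg => absurd hg (by simp)⟩, by simp⟩
    obtain ⟨v, hv, hdeg⟩ := hH H subset_rfl hne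
    obtain ⟨o, ho⟩ := ih (H.erase v) (erase_ssubset hv) fun G hG =>
      hH G (hG.trans (erase_subset v H))
    refine ⟨o.extendErase, fun u hu => ?_⟩
    rcases eq_or_ne u v with rfl | huv
    · exact (o.outdeg_extendErase_self_le hu).trans hdeg
    · have hu' : u ∈ H.erase v := mem_erase.2 ⟨huv, hu⟩
      rw [o.outdeg_extendErase_of_mem hu']
      exact ho u hu'

/-- Every finite `H ⊆ [p]^n` admits an orientation of its one-inclusion graph
with maximum out-degree at most `4·d_E(H)`. -/
theorem exists_orientation_outdeg_le_four_dE {n p : ℕ} (H : Finset (Fin n → Fin p)) :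
    ∃ o : OIOrientation (H : Set (Fin n → Fin p)), ∀ v ∈ H, outdeg o v ≤ 4 * dE H := by
  refine exists_orientation_outdeg_le_of_forall_exists_deg_le H fun G hGH hG => ?_
  obtain ⟨v, hv, hdeg⟩ := exists_deg_le_two_mul_dE hG
  have hdE := dE_mono hGH
  exact ⟨v, hv, by omega⟩
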